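/- arXiv:2602.10890 — 6 statements merged into one kernel-verified Lean document; each statement's English description precedes it below -/
import Mathlib

section
/- Let d ≥ 1, let n ∈ ℝ^d be a unit vector and β ∈ ℝ^d. With 𝒩 := [[0_{d,d}, n],[nᵀ, β·n]] and ℳ_D := [[0_{d,d}, −n],[nᵀ, 0]], the following hold: (i) (ℳ_D v, v) = 0 for all v ∈ ℝ^{d+1} (so ℳ_D is monotone); (ii) Ker(ℳ_D − 𝒩) = { (w, 0) : w ∈ ℝ^d }, i.e. membership in this kernel encodes the Dirichlet condition p = 0; (iii) Ker(ℳ_D − 𝒩) + Ker(ℳ_D + 𝒩) = ℝ^{d+1}. -/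
open Matrix

/-- Dirichlet boundary matrices of the Friedrichs form of the scalar
diffusion–advection–reaction problem: with `𝒩 = [[0, n],[nᵀ, β·n]]` and
`ℳ_D = [[0, −n],[nᵀ, 0]]` for a unit vector `n`:
(i) `(ℳ_D v, v) = 0` for all `v`; (ii) `Ker(ℳ_D − 𝒩) = {(w, 0)}` (i.e. the Dirichlet
condition `p = 0`); (iii) `Ker(ℳ_D − 𝒩) + Ker(ℳ_D + 𝒩) = ℝ^{d+1}`. -/
theorem stmt6 (d : ℕ) (hd : 1 ≤ d) (n β : Fin d → ℝ) (hn : ∑ i, n i ^ 2 = 1) :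
    let N : Matrix (Fin d ⊕ Unit) (Fin d ⊕ Unit) ℝ :=
      Matrix.fromBlocks 0 (Matrix.of fun j _ => n j) (Matrix.of fun _ j => n j)
        (Matrix.of fun _ _ => β ⬝ᵥ n)
    let MD : Matrix (Fin d ⊕ Unit) (Fin d ⊕ Unit) ℝ :=
      Matrix.fromBlocks 0 (Matrix.of fun j _ => -n j) (Matrix.of fun _ j => n j)
        (Matrix.of fun _ _ => 0)
    (∀ v : Fin d ⊕ Unit → ℝ, MD.mulVec v ⬝ᵥ v = 0) ∧
    (∀ v : Fin d ⊕ Unit → ℝ, (MD - N).mulVec v = 0 ↔ v (Sum.inr ()) = 0) ∧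
    LinearMap.ker (MD - N).mulVecLin ⊔ LinearMap.ker (MD + N).mulVecLin = ⊤ := by
  intro N MD
  -- there is i with n i ≠ 0
  obtain ⟨i, hi⟩ : ∃ i, n i ≠ 0 := by
    by_contra h
    push_neg at h
    simp [h] at hn
  have key : ∀ v : Fin d ⊕ Unit → ℝ, (MD - N).mulVec v = 0 ↔ v (Sum.inr ()) = 0 := by
    intro v
    constructor
    · intro h
      have := congrFun h (Sum.inl i)
      simp [MD, N, Matrix.mulVec, dotProduct, Fintype.sum_sum_type, Matrix.fromBlocks,
        Matrix.sub_apply] at this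
      rcases this with h1 | h1
      · exact absurd (by linarith : n i = 0) hi
      · exact h1
    · intro h
      funext j
      cases j with
      | inl j => simp [MD, N, Matrix.mulVec, dotProduct, Fintype.sum_sum_type,
          Matrix.fromBlocks, Matrix.sub_apply, h]
      | inr u => cases u; simp [MD, N, Matrix.mulVec, dotProduct, Fintype.sum_sum_type,
          Matrix.fromBlocks, Matrix.sub_apply, h]
  refine ⟨?_, key, ?_⟩
  · intro v
    simp [MD, Matrix.mulVec, dotProduct, Fintype.sum_sum_type, Matrix.fromBlocks,
      Finset.sum_mul, Finset.mul_sum, mul_comm, mul_assoc, mul_left_comm]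
  · rw [eq_top_iff]
    intro v _
    set c : ℝ := (β ⬝ᵥ n) * v (Sum.inr ()) / 2 with hc
    set u : Fin d ⊕ Unit → ℝ := Sum.elim (fun j => v (Sum.inl j) + c * n j) (fun _ => 0) with hu
    refine Submodule.mem_sup.2 ⟨u, ?_, v - u, ?_, by abel⟩
    · exact (key u).2 (by simp [hu])
    · show (MD + N).mulVec (v - u) = 0
      funext j
      cases j with
      | inl j => simp [MD, N, Matrix.mulVec, dotProduct, Fintype.sum_sum_type,
          Matrix.fromBlocks, Matrix.add_apply]
      | inr t =>
        cases t
        have : ∑ x : Fin d, n x * (v - u) (Sum.inl x)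
            = -((β ⬝ᵥ n) * v (Sum.inr ())) / 2 := by
          simp only [hu, Pi.sub_apply, Sum.elim_inl]
          have : ∀ x : Fin d, n x * (v (Sum.inl x) - (v (Sum.inl x) + c * n x))
              = -c * n x ^ 2 := by intro x; ring
          rw [Finset.sum_congr rfl fun x _ => this x, ← Finset.mul_sum, hn, hc]
          ring
        simp [MD, N, Matrix.mulVec, dotProduct, Fintype.sum_sum_type, Matrix.fromBlocks,
          Matrix.add_apply, add_mul, Finset.sum_add_distrib, hu] at this ⊢
        linarith
end

section
/- Let d ≥ 1, let n ∈ ℝ^d be a unit vector and β ∈ ℝ^d. With 𝒩 := [[0_{d,d}, n],[nᵀ, β·n]] and ℳ_N := [[0_{d,d}, n],[−nᵀ, 0]], the following hold: (i) (ℳ_N v, v) = 0 for all v ∈ ℝ^{d+1}; (ii) Ker(ℳ_N − 𝒩) = { (v_σ, v_p) ∈ ℝ^{d+1} : 2 n·v_σ + (β·n) v_p = 0 } and Ker(ℳ_N + 𝒩) = { (w, 0) : w ∈ ℝ^d }; (iii) Ker(ℳ_N − 𝒩) + Ker(ℳ_N + 𝒩) = ℝ^{d+1}. -/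
/-!
`ℳ_N` is skew-symmetric, which gives (i). The only nonzero row of `ℳ_N - 𝒩` is the last one,
`-(2 nᵀ, β·n)`, and `ℳ_N + 𝒩 = [[0, 2n], [0, β·n]]` sees only `v_p`, which gives (ii) since
`n ≠ 0`. For (iii), `Ker(ℳ_N + 𝒩)` is the hyperplane `v_p = 0`, so it suffices that
`Ker(ℳ_N - 𝒩)` contains a vector with `v_p = 1`, e.g. `(-(β·n) / (2 |n|²) n, 1)`.
-/

open Matrix

theorem Matrix.mulVec_dotProduct_self_eq_zero {ι R : Type*} [Fintype ι] [CommRing R]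
    [NoZeroDivisors R] [CharZero R] {A : Matrix ι ι R} (hA : Aᵀ = -A) (v : ι → R) :
    A *ᵥ v ⬝ᵥ v = 0 := by
  have h : A *ᵥ v ⬝ᵥ v = -(A *ᵥ v ⬝ᵥ v) := calc
    A *ᵥ v ⬝ᵥ v = Aᵀ *ᵥ v ⬝ᵥ v := by
      rw [dotProduct_comm, dotProduct_mulVec, mulVec_transpose]
    _ = -(A *ᵥ v ⬝ᵥ v) := by rw [hA, neg_mulVec, neg_dotProduct]
  exact self_eq_neg.1 h

theorem Submodule.sup_eq_top_of_ker_le {K V : Type*} [Field K] [AddCommGroup V] [Module K V]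
    {p q : Submodule K V} {f : V →ₗ[K] K} (hq : LinearMap.ker f ≤ q) {u : V} (hu : u ∈ p)
    (hfu : f u ≠ 0) : p ⊔ q = ⊤ := by
  refine eq_top_iff'.2 fun v => Submodule.mem_sup.2
    ⟨(f v / f u) • u, p.smul_mem _ hu, v - (f v / f u) • u, hq ?_, add_sub_cancel _ _⟩
  simp [hfu]

namespace Friedrichs

variable {ι : Type*}

/-- The matrix `𝒩` of the paper, with its corner entry `β·n` replaced by an arbitrary `c`. -/
def boundaryMatrix (n : ι → ℝ) (c : ℝ) : Matrix (ι ⊕ Unit) (ι ⊕ Unit) ℝ :=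
  fromBlocks 0 (of fun j _ => n j) (of fun _ j => n j) (of fun _ _ => c)

/-- The matrix `ℳ_N` of the paper. -/
def neumannMatrix (n : ι → ℝ) : Matrix (ι ⊕ Unit) (ι ⊕ Unit) ℝ :=
  fromBlocks 0 (of fun j _ => n j) (of fun _ j => -n j) (of fun _ _ => 0)

theorem neumannMatrix_transpose (n : ι → ℝ) : (neumannMatrix n)ᵀ = -neumannMatrix n := by
  ext (i | i) (j | j) <;> simp [neumannMatrix]

variable [Fintype ι] (c : ℝ)

theorem neumannMatrix_sub_boundaryMatrix_mulVec (n : ι → ℝ) (v : ι ⊕ Unit → ℝ) :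
    (neumannMatrix n - boundaryMatrix n c) *ᵥ v =
      (0 : ι → ℝ) ⊕ᵥ fun _ => -(2 * (n ⬝ᵥ (v ∘ Sum.inl)) + c * v (Sum.inr ())) := by
  ext (i | i)
  · simp [neumannMatrix, boundaryMatrix, mulVec, dotProduct]
  · simp [neumannMatrix, boundaryMatrix, mulVec, dotProduct, Finset.mul_sum,
      ← Finset.sum_neg_distrib]
    ring_nf

theorem neumannMatrix_add_boundaryMatrix_mulVec (n : ι → ℝ) (v : ι ⊕ Unit → ℝ) :
    (neumannMatrix n + boundaryMatrix n c) *ᵥ v =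
      (fun i => 2 * n i * v (Sum.inr ())) ⊕ᵥ fun _ => c * v (Sum.inr ()) := by
  ext (i | i) <;> simp [neumannMatrix, boundaryMatrix, mulVec, dotProduct, two_mul]

theorem neumannMatrix_sub_boundaryMatrix_mulVec_eq_zero_iff (n : ι → ℝ) (v : ι ⊕ Unit → ℝ) :
    (neumannMatrix n - boundaryMatrix n c) *ᵥ v = 0 ↔
      2 * (∑ i, n i * v (Sum.inl i)) + c * v (Sum.inr ()) = 0 := by
  rw [neumannMatrix_sub_boundaryMatrix_mulVec]
  simp only [funext_iff, Sum.forall, Sum.elim_inl, Sum.elim_inr, Pi.zero_apply, neg_eq_zero,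
    forall_const, implies_true, true_and]
  rfl

variable {n : ι → ℝ}

theorem neumannMatrix_add_boundaryMatrix_mulVec_eq_zero_iff (hn : n ≠ 0) (v : ι ⊕ Unit → ℝ) :
    (neumannMatrix n + boundaryMatrix n c) *ᵥ v = 0 ↔ v (Sum.inr ()) = 0 := by
  obtain ⟨i, hi⟩ : ∃ i, n i ≠ 0 := Function.ne_iff.1 hn
  rw [neumannMatrix_add_boundaryMatrix_mulVec]
  refine ⟨fun h => ?_, fun h => by ext (j | j) <;> simp [h]⟩
  simpa [hi] using congrFun h (Sum.inl i)

theorem exists_neumannMatrix_sub_boundaryMatrix_mulVec_eq_zero (hn : n ≠ 0) :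
    ∃ u : ι ⊕ Unit → ℝ, (neumannMatrix n - boundaryMatrix n c) *ᵥ u = 0 ∧ u (Sum.inr ()) = 1 := by
  have hnn : n ⬝ᵥ n ≠ 0 := dotProduct_self_eq_zero.not.2 hn
  refine ⟨(fun i => -c / (2 * (n ⬝ᵥ n)) * n i) ⊕ᵥ fun _ => 1, ?_, rfl⟩
  rw [neumannMatrix_sub_boundaryMatrix_mulVec_eq_zero_iff]
  have hsum : ∑ i, n i * (-c / (2 * (n ⬝ᵥ n)) * n i) = -c / (2 * (n ⬝ᵥ n)) * (n ⬝ᵥ n) := by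
    simp only [dotProduct, Finset.mul_sum]
    exact Finset.sum_congr rfl fun i _ => by ring
  simp only [Sum.elim_inl, Sum.elim_inr, hsum]
  field_simp
  ring

theorem ker_neumannMatrix_sub_sup_ker_add_eq_top (hn : n ≠ 0) :
    LinearMap.ker (neumannMatrix n - boundaryMatrix n c).mulVecLin ⊔
      LinearMap.ker (neumannMatrix n + boundaryMatrix n c).mulVecLin = ⊤ := by
  obtain ⟨u, hu, hu1⟩ := exists_neumannMatrix_sub_boundaryMatrix_mulVec_eq_zero c hn
  refine Submodule.sup_eq_top_of_ker_le (f := LinearMap.proj (Sum.inr ())) (u := u)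
    (fun v hv => (neumannMatrix_add_boundaryMatrix_mulVec_eq_zero_iff c hn v).2 hv) hu ?_
  simp [hu1]

end Friedrichs

open Friedrichs in
theorem stmt7_general (d : ℕ) (n β : Fin d → ℝ) (hn : ∑ i, n i ^ 2 = 1) :
    let N : Matrix (Fin d ⊕ Unit) (Fin d ⊕ Unit) ℝ :=
      Matrix.fromBlocks 0 (Matrix.of fun j _ => n j) (Matrix.of fun _ j => n j)
        (Matrix.of fun _ _ => β ⬝ᵥ n)
    let MN : Matrix (Fin d ⊕ Unit) (Fin d ⊕ Unit) ℝ :=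
      Matrix.fromBlocks 0 (Matrix.of fun j _ => n j) (Matrix.of fun _ j => -n j)
        (Matrix.of fun _ _ => 0)
    (∀ v : Fin d ⊕ Unit → ℝ, MN.mulVec v ⬝ᵥ v = 0) ∧
    (∀ v : Fin d ⊕ Unit → ℝ, (MN - N).mulVec v = 0 ↔
      2 * (∑ i, n i * v (Sum.inl i)) + (β ⬝ᵥ n) * v (Sum.inr ()) = 0) ∧
    (∀ v : Fin d ⊕ Unit → ℝ, (MN + N).mulVec v = 0 ↔ v (Sum.inr ()) = 0) ∧
    LinearMap.ker (MN - N).mulVecLin ⊔ LinearMap.ker (MN + N).mulVecLin = ⊤ := by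
  have hn0 : n ≠ 0 := by
    rintro rfl
    simp at hn
  exact ⟨mulVec_dotProduct_self_eq_zero (neumannMatrix_transpose n),
    neumannMatrix_sub_boundaryMatrix_mulVec_eq_zero_iff _ n,
    neumannMatrix_add_boundaryMatrix_mulVec_eq_zero_iff _ hn0,
    ker_neumannMatrix_sub_sup_ker_add_eq_top _ hn0⟩

/-- Neumann boundary matrices of the Friedrichs form of the scalar
diffusion–advection–reaction problem: with `𝒩 = [[0, n],[nᵀ, β·n]]` and
`ℳ_N = [[0, n],[−nᵀ, 0]]` for a unit vector `n`:
(i) `(ℳ_N v, v) = 0` for all `v`;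
(ii) `Ker(ℳ_N − 𝒩) = {v : 2 n·v_σ + (β·n) v_p = 0}` and `Ker(ℳ_N + 𝒩) = {(w, 0)}`;
(iii) `Ker(ℳ_N − 𝒩) + Ker(ℳ_N + 𝒩) = ℝ^{d+1}`. -/
theorem stmt7 (d : ℕ) (hd : 1 ≤ d) (n β : Fin d → ℝ) (hn : ∑ i, n i ^ 2 = 1) :
    let N : Matrix (Fin d ⊕ Unit) (Fin d ⊕ Unit) ℝ :=
      Matrix.fromBlocks 0 (Matrix.of fun j _ => n j) (Matrix.of fun _ j => n j)
        (Matrix.of fun _ _ => β ⬝ᵥ n)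
    let MN : Matrix (Fin d ⊕ Unit) (Fin d ⊕ Unit) ℝ :=
      Matrix.fromBlocks 0 (Matrix.of fun j _ => n j) (Matrix.of fun _ j => -n j)
        (Matrix.of fun _ _ => 0)
    (∀ v : Fin d ⊕ Unit → ℝ, MN.mulVec v ⬝ᵥ v = 0) ∧
    (∀ v : Fin d ⊕ Unit → ℝ, (MN - N).mulVec v = 0 ↔
      2 * (∑ i, n i * v (Sum.inl i)) + (β ⬝ᵥ n) * v (Sum.inr ()) = 0) ∧
    (∀ v : Fin d ⊕ Unit → ℝ, (MN + N).mulVec v = 0 ↔ v (Sum.inr ()) = 0) ∧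
    LinearMap.ker (MN - N).mulVecLin ⊔ LinearMap.ker (MN + N).mulVecLin = ⊤ :=
  stmt7_general d n β hn
end

section
/- Let n ∈ ℝ³ be a unit vector and β ∈ ℝ³. With 𝒩 := [[0_{3,3}, −V_n],[V_n, (β·n) I₃]] and ℳ_D := [[0_{3,3}, V_n],[V_n, |β·n| I₃]], a vector z = (b, p) ∈ ℝ⁶ belongs to Ker(ℳ_D − 𝒩) if and only if n × p = 0 and, in the case β·n < 0, additionally p = 0. Hence membership in Ker(ℳ_D − 𝒩) is equivalent to the Dirichlet boundary condition n × p + χ_{β·n<0} (p·n) n = 0 of the vector diffusion–advection–reaction problem. -/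
/-!
Subtracting the block matrices leaves `ℳ_D − 𝒩 = [[0, 2 V_n], [0, (|β·n| − β·n) I₃]]`, so `z = (b, p)`
lies in the kernel iff `n × p = 0` and `(|β·n| − β·n) p = 0`; the scalar vanishes exactly when
`β·n ≥ 0`. For the Dirichlet form, dotting `n × p + (p·n) n = 0` with `n` kills the cross product
and gives `p·n = 0`, hence also `n × p = 0`; Lagrange's identity
`|n × p|² = |n|² |p|² − (n·p)²` then forces `p = 0`.
-/

open Matrix

/-- The cross-product matrix `V_α`, characterized by `V_α s = α × s`. -/
def crossMat (α : Fin 3 → ℝ) : Matrix (Fin 3) (Fin 3) ℝ :=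
  !![0, -α 2, α 1; α 2, 0, -α 0; -α 1, α 0, 0]

theorem crossMat_mulVec (α s : Fin 3 → ℝ) : crossMat α *ᵥ s = α ⨯₃ s := by
  ext i
  fin_cases i <;> simp [crossMat, cross_apply, mulVec, dotProduct, Fin.sum_univ_three] <;> ring

theorem fromBlocks_sub_fromBlocks {l m n o R : Type*} [Sub R]
    (A A' : Matrix n l R) (B B' : Matrix n m R) (C C' : Matrix o l R) (D D' : Matrix o m R) :
    fromBlocks A B C D - fromBlocks A' B' C' D' = fromBlocks (A - A') (B - B') (C - C') (D - D') := by
  ext (i | i) (j | j) <;> rfl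

theorem abs_sub_self_smul_eq_zero_iff {M : Type*} [AddCommGroup M] [Module ℝ M] (c : ℝ) (p : M) :
    (|c| - c) • p = 0 ↔ (c < 0 → p = 0) := by
  rw [smul_eq_zero, sub_eq_zero, abs_eq_self, or_iff_not_imp_left, not_le]

section CrossProduct

variable {R : Type*} [CommRing R] [LinearOrder R] [IsStrictOrderedRing R] {n p : Fin 3 → R}

theorem eq_zero_of_cross_eq_zero_of_dotProduct_eq_zero (hn : n ≠ 0) (hc : n ⨯₃ p = 0)
    (hd : n ⬝ᵥ p = 0) : p = 0 := by
  have lagrange := cross_dot_cross n p n p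
  rw [hc, hd, dotProduct_comm p n, hd, zero_dotProduct, mul_zero, sub_zero, eq_comm,
    mul_eq_zero] at lagrange
  exact dotProduct_self_eq_zero.mp (lagrange.resolve_left (mt dotProduct_self_eq_zero.mp hn))

theorem cross_add_dotProduct_smul_eq_zero_iff (hn : n ≠ 0) :
    n ⨯₃ p + (p ⬝ᵥ n) • n = 0 ↔ p = 0 := by
  refine ⟨fun h => ?_, fun h => by simp [h]⟩
  have hd : p ⬝ᵥ n = 0 := by
    have := congrArg (n ⬝ᵥ ·) h
    simp only [dotProduct_add, dot_self_cross, dotProduct_smul, smul_eq_mul, zero_add,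
      dotProduct_zero, mul_eq_zero] at this
    exact this.resolve_right (mt dotProduct_self_eq_zero.mp hn)
  have hc : n ⨯₃ p = 0 := by simpa [hd] using h
  exact eq_zero_of_cross_eq_zero_of_dotProduct_eq_zero hn hc (dotProduct_comm n p ▸ hd)

end CrossProduct

theorem fromBlocks_crossMat_sub_mulVec_eq_zero_iff (n : Fin 3 → ℝ) (c : ℝ)
    (z : Fin 3 ⊕ Fin 3 → ℝ) :
    (fromBlocks 0 (crossMat n) (crossMat n) (|c| • 1) -
        fromBlocks 0 (-crossMat n) (crossMat n) (c • 1)) *ᵥ z = 0 ↔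
      n ⨯₃ (z ∘ Sum.inr) = 0 ∧ (c < 0 → z ∘ Sum.inr = 0) := by
  rw [fromBlocks_sub_fromBlocks, fromBlocks_mulVec, ← Sum.elim_zero_zero, Sum.elim_eq_iff,
    ← abs_sub_self_smul_eq_zero_iff]
  simp only [sub_neg_eq_add, sub_self, zero_mulVec, zero_add, add_mulVec, crossMat_mulVec,
    ← sub_smul, smul_mulVec, one_mulVec]
  rw [← two_smul ℝ, smul_eq_zero, or_iff_right two_ne_zero]

/-- With `𝒩 = [[0, −V_n],[V_n, (β·n) I₃]]` and
`ℳ_D = [[0, V_n],[V_n, |β·n| I₃]]` for a unit vector `n`, `z = (b, p) ∈ Ker(ℳ_D − 𝒩)` iff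
`n × p = 0` and, if `β·n < 0`, additionally `p = 0`; equivalently, iff the Dirichlet condition
`n × p + χ_{β·n<0} (p·n) n = 0` holds. -/
theorem stmt11 (n β : Fin 3 → ℝ) (hn : ∑ i, n i ^ 2 = 1) :
    let N : Matrix (Fin 3 ⊕ Fin 3) (Fin 3 ⊕ Fin 3) ℝ :=
      Matrix.fromBlocks 0 (-crossMat n) (crossMat n) ((β ⬝ᵥ n) • 1)
    let MD : Matrix (Fin 3 ⊕ Fin 3) (Fin 3 ⊕ Fin 3) ℝ :=
      Matrix.fromBlocks 0 (crossMat n) (crossMat n) (|β ⬝ᵥ n| • 1)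
    ∀ z : Fin 3 ⊕ Fin 3 → ℝ,
      ((MD - N).mulVec z = 0 ↔
        (crossProduct n (fun i => z (Sum.inr i)) = 0 ∧
          (β ⬝ᵥ n < 0 → (fun i => z (Sum.inr i)) = (0 : Fin 3 → ℝ)))) ∧
      ((MD - N).mulVec z = 0 ↔
        crossProduct n (fun i => z (Sum.inr i)) +
          (if β ⬝ᵥ n < 0 then (((fun i => z (Sum.inr i)) : Fin 3 → ℝ) ⬝ᵥ n) • n else 0) = 0) := by
  intro N MD z
  have hn0 : n ≠ 0 := by
    rintro rfl
    simp at hn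
  have hker := fromBlocks_crossMat_sub_mulVec_eq_zero_iff n (β ⬝ᵥ n) z
  refine ⟨hker, hker.trans ?_⟩
  split_ifs with hneg
  · rw [cross_add_dotProduct_smul_eq_zero_iff hn0]
    exact ⟨fun h => h.2 hneg, fun h => ⟨by simp [Function.comp_def, h], fun _ => h⟩⟩
  · rw [add_zero]
    exact and_iff_left fun h => absurd h hneg
end

section
/- Let G ∈ ℝ^{3×3}, ω ∈ ℝ³, γ ∈ ℝ, ε > 0 and r > 0 be such that qᵀ( (γ − tr(G)/2) I₃ + (G + Gᵀ)/2 ) q ≥ r ‖q‖² for all q ∈ ℝ³. Define the 6×6 matrices 𝒦 := [[ε⁻¹ I₃, 0_{3,3}],[0_{3,3}, G − V_ω + γ I₃]] and D := [[0_{3,3}, 0_{3,3}],[0_{3,3}, tr(G) I₃]]. Then 𝒦 + 𝒦ᵀ − D ⪰ 2 min(ε⁻¹, r) I₆, i.e. zᵀ(𝒦 + 𝒦ᵀ − D) z ≥ 2 min(ε⁻¹, r) ‖z‖² for all z ∈ ℝ⁶. (With G = ∇β, ω = ∇×β and D = ∇·𝒜, this is the Friedrichs positivity condition 𝒦 + 𝒦ᵀ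 − ∇·𝒜 ⪰ 2𝔯_♭ I for the vector diffusion–advection–reaction system under the assumption (γ − (∇·β)/2) I₃ + ∇_s β ⪰ r I₃.) -/
/-! The skew part `V_ω` drops out of `𝒦 + 𝒦ᵀ`, so `𝒦 + 𝒦ᵀ − D` is block diagonal with blocks
`2 ε⁻¹ I₃` and twice the matrix of the hypothesis. The quadratic form of a block-diagonal matrix
is the sum of the forms of its blocks, hence it is bounded below by the smaller of the two
block bounds. -/

open Matrix

theorem crossMat_transpose (α : Fin 3 → ℝ) : (crossMat α)ᵀ = -crossMat α := by
  ext i j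
  fin_cases i <;> fin_cases j <;> simp [crossMat]

theorem add_transpose_sub_trace_of_transpose_eq_neg {n : Type*} [Fintype n] [DecidableEq n]
    (G V : Matrix n n ℝ) (hV : Vᵀ = -V) (γ : ℝ) :
    (G - V + γ • 1) + (G - V + γ • 1)ᵀ - G.trace • (1 : Matrix n n ℝ)
      = (2 : ℝ) • ((γ - G.trace / 2) • (1 : Matrix n n ℝ) + (2 : ℝ)⁻¹ • (G + Gᵀ)) := by
  rw [transpose_add, transpose_sub, hV, transpose_smul, transpose_one, smul_add, smul_smul,
    smul_smul, mul_sub, mul_div_cancel₀ _ two_ne_zero, mul_inv_cancel₀ two_ne_zero]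
  module

theorem dotProduct_smul_one_mulVec_self {n : Type*} [Fintype n] [DecidableEq n] (c : ℝ)
    (x : n → ℝ) : x ⬝ᵥ (c • 1 : Matrix n n ℝ) *ᵥ x = c * ∑ i, x i ^ 2 := by
  rw [smul_mulVec, one_mulVec, dotProduct_smul, smul_eq_mul]
  simp only [dotProduct, sq]

theorem le_dotProduct_fromBlocks_mulVec {m n : Type*} [Fintype m] [Fintype n]
    (A : Matrix m m ℝ) (B : Matrix n n ℝ) {a b : ℝ}
    (hA : ∀ x, a * ∑ i, x i ^ 2 ≤ x ⬝ᵥ A *ᵥ x) (hB : ∀ y, b * ∑ i, y i ^ 2 ≤ y ⬝ᵥ B *ᵥ y)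
    (z : m ⊕ n → ℝ) :
    min a b * ∑ i, z i ^ 2 ≤ z ⬝ᵥ fromBlocks A 0 0 B *ᵥ z := by
  obtain ⟨x, y, rfl⟩ : ∃ x y, z = Sum.elim x y := ⟨z ∘ Sum.inl, z ∘ Sum.inr, by simp⟩
  rw [fromBlocks_mulVec, Fintype.sum_sum_type]
  simp only [Sum.elim_inl, Sum.elim_inr, Sum.elim_comp_inl, Sum.elim_comp_inr, zero_mulVec, add_zero, zero_add,
    sumElim_dotProduct_sumElim]
  have hx : min a b * ∑ i, x i ^ 2 ≤ a * ∑ i, x i ^ 2 :=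
    mul_le_mul_of_nonneg_right (min_le_left a b) (by positivity)
  have hy : min a b * ∑ i, y i ^ 2 ≤ b * ∑ i, y i ^ 2 :=
    mul_le_mul_of_nonneg_right (min_le_right a b) (by positivity)
  linarith [hA x, hB y]

theorem stmt13_general (G : Matrix (Fin 3) (Fin 3) ℝ) (ω : Fin 3 → ℝ) (γ ε r : ℝ)
    (hpos : ∀ q : Fin 3 → ℝ,
      r * ∑ i, q i ^ 2 ≤
        q ⬝ᵥ ((γ - G.trace / 2) • (1 : Matrix (Fin 3) (Fin 3) ℝ)
          + (2 : ℝ)⁻¹ • (G + Gᵀ)).mulVec q) :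
    let K : Matrix (Fin 3 ⊕ Fin 3) (Fin 3 ⊕ Fin 3) ℝ :=
      Matrix.fromBlocks (ε⁻¹ • 1) 0 0 (G - crossMat ω + γ • 1)
    let D : Matrix (Fin 3 ⊕ Fin 3) (Fin 3 ⊕ Fin 3) ℝ :=
      Matrix.fromBlocks 0 0 0 (G.trace • 1)
    ∀ z : Fin 3 ⊕ Fin 3 → ℝ,
      2 * min ε⁻¹ r * ∑ i, z i ^ 2 ≤ z ⬝ᵥ (K + Kᵀ - D).mulVec z := by
  intro K D z
  have hKD : K + Kᵀ - D = fromBlocks ((2 * ε⁻¹) • 1) 0 0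
      ((2 : ℝ) • ((γ - G.trace / 2) • (1 : Matrix (Fin 3) (Fin 3) ℝ) + (2 : ℝ)⁻¹ • (G + Gᵀ))) := by
    rw [← add_transpose_sub_trace_of_transpose_eq_neg G _ (crossMat_transpose ω) γ]
    simp only [K, D, fromBlocks_transpose, fromBlocks_add, sub_eq_add_neg, fromBlocks_neg]
    congr 1 <;> simp [two_mul, add_smul]
  have hx (x : Fin 3 → ℝ) : 2 * ε⁻¹ * ∑ i, x i ^ 2 ≤ x ⬝ᵥ ((2 * ε⁻¹) • 1 : Matrix _ _ ℝ) *ᵥ x :=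
    (dotProduct_smul_one_mulVec_self _ x).ge
  have hy (y : Fin 3 → ℝ) : 2 * r * ∑ i, y i ^ 2 ≤ y ⬝ᵥ ((2 : ℝ) • ((γ - G.trace / 2) •
      (1 : Matrix (Fin 3) (Fin 3) ℝ) + (2 : ℝ)⁻¹ • (G + Gᵀ))) *ᵥ y := by
    rw [smul_mulVec, dotProduct_smul, smul_eq_mul, mul_assoc]
    exact mul_le_mul_of_nonneg_left (hpos y) zero_le_two
  rw [hKD, mul_min_of_nonneg _ _ zero_le_two]
  exact le_dotProduct_fromBlocks_mulVec _ _ hx hy z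

/-- If `(γ − tr(G)/2) I₃ + (G + Gᵀ)/2 ⪰ r I₃` with `ε > 0`, `r > 0`, then with
`𝒦 = [[ε⁻¹ I₃, 0],[0, G − V_ω + γ I₃]]` and `D = [[0, 0],[0, tr(G) I₃]]` one has
`𝒦 + 𝒦ᵀ − D ⪰ 2 min(ε⁻¹, r) I₆`: the Friedrichs positivity condition for the vector
diffusion–advection–reaction system. -/
theorem stmt13 (G : Matrix (Fin 3) (Fin 3) ℝ) (ω : Fin 3 → ℝ) (γ ε r : ℝ)
    (hε : 0 < ε) (hr : 0 < r)
    (hpos : ∀ q : Fin 3 → ℝ,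
      r * ∑ i, q i ^ 2 ≤
        q ⬝ᵥ ((γ - G.trace / 2) • (1 : Matrix (Fin 3) (Fin 3) ℝ)
          + (2 : ℝ)⁻¹ • (G + Gᵀ)).mulVec q) :
    let K : Matrix (Fin 3 ⊕ Fin 3) (Fin 3 ⊕ Fin 3) ℝ :=
      Matrix.fromBlocks (ε⁻¹ • 1) 0 0 (G - crossMat ω + γ • 1)
    let D : Matrix (Fin 3 ⊕ Fin 3) (Fin 3 ⊕ Fin 3) ℝ :=
      Matrix.fromBlocks 0 0 0 (G.trace • 1)
    ∀ z : Fin 3 ⊕ Fin 3 → ℝ,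
      2 * min ε⁻¹ r * ∑ i, z i ^ 2 ≤ z ⬝ᵥ (K + Kᵀ - D).mulVec z :=
  stmt13_general G ω γ ε r hpos
end

section
/- Let n ∈ ℝ³ be a unit vector and β ∈ ℝ³. With 𝒩 := [[0_{3,3}, −V_n],[V_n, (β·n) I₃]] and ℳ_D := [[0_{3,3}, V_n],[V_n, |β·n| I₃]], the following hold: (i) (ℳ_D z, z) = |β·n| ‖p‖² ≥ 0 for all z = (b, p) ∈ ℝ⁶ (so ℳ_D is monotone); (ii) Ker(ℳ_D − 𝒩) + Ker(ℳ_D + 𝒩) = ℝ⁶. -/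
/-!
Write `V = V_n` and `c = β·n`. Since `V` is antisymmetric, the off-diagonal blocks of `ℳ_D`
contribute nothing to `(ℳ_D z, z)`. For (ii), `ℳ_D ∓ 𝒩` has blocks `2V` and `(|c| ∓ c) I₃`.
If `c < 0` the two kernels contain `{(b, 0)}` and `{(0, p)}` respectively. If `c ≥ 0`, write
`(b, p) = (b - c V p, p + V² p) + (c V p, -V² p)`: the second summand lies in `Ker(ℳ_D + 𝒩)`
by linearity, and the first lies in `Ker(ℳ_D - 𝒩)` because `V³ = -‖n‖² V = -V`.
-/

open Matrix

theorem cross_cross_cross_self (n p : Fin 3 → ℝ) :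
    n ⨯₃ (n ⨯₃ (n ⨯₃ p)) = -((n ⬝ᵥ n) • n ⨯₃ p) := by
  rw [cross_cross_eq_smul_sub_smul', dot_self_cross, zero_smul, zero_sub]

section SkewBlocks

variable {m R : Type*} [Fintype m] [DecidableEq m] [CommRing R]

theorem fromBlocks_mulVec_dotProduct_self {A : Matrix m m R} (hA : Aᵀ = -A) (d : R)
    (z : m ⊕ m → R) :
    fromBlocks 0 A A (d • 1) *ᵥ z ⬝ᵥ z = d * (z ∘ Sum.inr ⬝ᵥ z ∘ Sum.inr) := by
  have hskew : A *ᵥ (z ∘ Sum.inr) ⬝ᵥ z ∘ Sum.inl = -(A *ᵥ (z ∘ Sum.inl) ⬝ᵥ z ∘ Sum.inr) := by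
    rw [dotProduct_comm, dotProduct_mulVec, ← mulVec_transpose, hA, neg_mulVec, neg_dotProduct]
  conv_lhs => rw [fromBlocks_mulVec, ← Sum.elim_comp_inl_inr z, sumElim_dotProduct_sumElim]
  simp only [Sum.elim_comp_inl, Sum.elim_comp_inr, zero_mulVec, zero_add, add_dotProduct, hskew,
    smul_mulVec, one_mulVec, smul_dotProduct, smul_eq_mul]
  ring

end SkewBlocks

/-- `𝒩` and `ℳ_D` of the statement, with `c = β ⬝ᵥ n`. -/
def boundaryN (n : Fin 3 → ℝ) (c : ℝ) : Matrix (Fin 3 ⊕ Fin 3) (Fin 3 ⊕ Fin 3) ℝ :=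
  fromBlocks 0 (-crossMat n) (crossMat n) (c • 1)

def boundaryMD (n : Fin 3 → ℝ) (c : ℝ) : Matrix (Fin 3 ⊕ Fin 3) (Fin 3 ⊕ Fin 3) ℝ :=
  fromBlocks 0 (crossMat n) (crossMat n) (|c| • 1)

section Boundary

variable (n : Fin 3 → ℝ) (c : ℝ)

theorem boundaryMD_mulVec_dotProduct_self (z : Fin 3 ⊕ Fin 3 → ℝ) :
    boundaryMD n c *ᵥ z ⬝ᵥ z = |c| * ∑ i, z (Sum.inr i) ^ 2 := by
  rw [boundaryMD, fromBlocks_mulVec_dotProduct_self (crossMat_transpose n)]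
  simp [dotProduct, sq]

theorem boundaryMD_sub_boundaryN :
    boundaryMD n c - boundaryN n c = fromBlocks 0 ((2 : ℝ) • crossMat n) 0 ((|c| - c) • 1) := by
  rw [boundaryMD, boundaryN, sub_eq_add_neg, fromBlocks_neg, fromBlocks_add, sub_smul, two_smul]
  simp [sub_eq_add_neg]

theorem boundaryMD_add_boundaryN :
    boundaryMD n c + boundaryN n c = fromBlocks 0 0 ((2 : ℝ) • crossMat n) ((|c| + c) • 1) := by
  rw [boundaryMD, boundaryN, fromBlocks_add, add_smul, two_smul]
  simp

theorem sumElim_mem_ker_boundaryMD_sub_boundaryN_iff {b p : Fin 3 → ℝ} :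
    Sum.elim b p ∈ LinearMap.ker (boundaryMD n c - boundaryN n c).mulVecLin ↔
      n ⨯₃ p = 0 ∧ (|c| - c) • p = 0 := by
  rw [LinearMap.mem_ker, mulVecLin_apply, boundaryMD_sub_boundaryN, fromBlocks_mulVec,
    ← Sum.elim_zero_zero, Sum.elim_eq_iff]
  simp [smul_mulVec, crossMat_mulVec]

theorem sumElim_mem_ker_boundaryMD_add_boundaryN_iff {b p : Fin 3 → ℝ} :
    Sum.elim b p ∈ LinearMap.ker (boundaryMD n c + boundaryN n c).mulVecLin ↔
      (2 : ℝ) • n ⨯₃ b + (|c| + c) • p = 0 := by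
  rw [LinearMap.mem_ker, mulVecLin_apply, boundaryMD_add_boundaryN, fromBlocks_mulVec,
    ← Sum.elim_zero_zero, Sum.elim_eq_iff]
  simp [smul_mulVec, crossMat_mulVec]

theorem ker_boundaryMD_sub_boundaryN_sup_ker_add_eq_top (hn : n ⬝ᵥ n = 1) :
    LinearMap.ker (boundaryMD n c - boundaryN n c).mulVecLin ⊔
      LinearMap.ker (boundaryMD n c + boundaryN n c).mulVecLin = ⊤ := by
  refine eq_top_iff.2 fun z _ => ?_
  rw [← Sum.elim_comp_inl_inr z]
  generalize z ∘ Sum.inl = b, z ∘ Sum.inr = p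
  rcases lt_or_ge c 0 with hc | hc
  · refine Submodule.mem_sup.2 ⟨Sum.elim b 0, ?_, Sum.elim 0 p, ?_, by simp [← Sum.elim_add_add]⟩
    · rw [sumElim_mem_ker_boundaryMD_sub_boundaryN_iff]
      simp
    · rw [sumElim_mem_ker_boundaryMD_add_boundaryN_iff, abs_of_neg hc]
      simp
  · refine Submodule.mem_sup.2 ⟨Sum.elim (b - c • n ⨯₃ p) (p + n ⨯₃ (n ⨯₃ p)), ?_,
      Sum.elim (c • n ⨯₃ p) (-(n ⨯₃ (n ⨯₃ p))), ?_,
      by rw [← Sum.elim_add_add, sub_add_cancel, add_neg_cancel_right]⟩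
    · rw [sumElim_mem_ker_boundaryMD_sub_boundaryN_iff, abs_of_nonneg hc, map_add,
        cross_cross_cross_self, hn, one_smul, add_neg_cancel, sub_self, zero_smul]
      exact ⟨rfl, rfl⟩
    · rw [sumElim_mem_ker_boundaryMD_add_boundaryN_iff, abs_of_nonneg hc, map_smul]
      module

end Boundary

/-- Dirichlet boundary matrices of the Friedrichs form of the vector
diffusion–advection–reaction problem: with `𝒩 = [[0, −V_n],[V_n, (β·n) I₃]]` and
`ℳ_D = [[0, V_n],[V_n, |β·n| I₃]]` for a unit vector `n`:
(i) `(ℳ_D z, z) = |β·n| ‖p‖² ≥ 0` for all `z = (b, p)`;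
(ii) `Ker(ℳ_D − 𝒩) + Ker(ℳ_D + 𝒩) = ℝ⁶`. -/
theorem stmt14 (n β : Fin 3 → ℝ) (hn : ∑ i, n i ^ 2 = 1) :
    let N : Matrix (Fin 3 ⊕ Fin 3) (Fin 3 ⊕ Fin 3) ℝ :=
      Matrix.fromBlocks 0 (-crossMat n) (crossMat n) ((β ⬝ᵥ n) • 1)
    let MD : Matrix (Fin 3 ⊕ Fin 3) (Fin 3 ⊕ Fin 3) ℝ :=
      Matrix.fromBlocks 0 (crossMat n) (crossMat n) (|β ⬝ᵥ n| • 1)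
    (∀ z : Fin 3 ⊕ Fin 3 → ℝ,
      MD.mulVec z ⬝ᵥ z = |β ⬝ᵥ n| * ∑ i, z (Sum.inr i) ^ 2 ∧ 0 ≤ MD.mulVec z ⬝ᵥ z) ∧
    LinearMap.ker (MD - N).mulVecLin ⊔ LinearMap.ker (MD + N).mulVecLin = ⊤ := by
  intro N MD
  have hform : ∀ z, MD *ᵥ z ⬝ᵥ z = |β ⬝ᵥ n| * ∑ i, z (Sum.inr i) ^ 2 :=
    boundaryMD_mulVec_dotProduct_self n (β ⬝ᵥ n)
  have hunit : n ⬝ᵥ n = 1 := by simpa [dotProduct, sq] using hn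
  refine ⟨fun z => ⟨hform z, ?_⟩,
    ker_boundaryMD_sub_boundaryN_sup_ker_add_eq_top n (β ⬝ᵥ n) hunit⟩
  rw [hform]
  positivity
end

section
/- Let d ≥ 1, let n ∈ ℝ^d be a unit vector, β ∈ ℝ^d, and A := max(1, ‖β‖). With 𝒩 := [[0_{d,d}, n],[nᵀ, β·n]], ℳ_D := [[0_{d,d}, −n],[nᵀ, 0]], and the boundary penalty S^b := A [[0_{d,d}, 0_d],[0_dᵀ, 1]], the following hold: (i) Ker(ℳ_D − 𝒩) ⊆ Ker(ℳ_D + S^b − 𝒩); (ii) ((ℳ_D + S^b) v, v) = A v_p² ≥ 0 for all v = (v_σ, v_p) ∈ ℝ^{d+1}; (iii) for all w, v ∈ ℝ^{d+1}, |((ℳ_D + S^b + 𝒩) w, v)| ≤ 4 A^{1/2} ‖w‖ ((ℳ_D + S^b) v, v)^{1/2}. -/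
/-!
Every block of `ℳ_D + S^b` except the penalty `A` is skew-symmetric, so the quadratic form only
sees `A v_p²`. In `ℳ_D + S^b + 𝒩` the off-diagonal `±n` blocks of `ℳ_D` and `𝒩` cancel in the
first block row, so this matrix has no entry outside its last row and the bilinear form is
`(2 n·w_σ + (β·n + A) w_p) v_p`; Cauchy–Schwarz with `‖n‖ = 1` and `|β·n| ≤ ‖β‖ ≤ A` bounds the
first factor by `4 A ‖w‖`, and `A |v_p| = √A ((ℳ_D + S^b) v, v)^{1/2}`. For (i), the first block
row of `(ℳ_D − 𝒩) v` is `−2 v_p n`, so `v_p = 0`, which kills `S^b v`.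
-/

open Matrix

namespace BoundaryPenalty

variable {ι : Type*} [Fintype ι]

def boundaryN (n β : ι → ℝ) : Matrix (ι ⊕ Unit) (ι ⊕ Unit) ℝ :=
  fromBlocks 0 (of fun j _ => n j) (of fun _ j => n j) (of fun _ _ => β ⬝ᵥ n)

def boundaryMD (n : ι → ℝ) : Matrix (ι ⊕ Unit) (ι ⊕ Unit) ℝ :=
  fromBlocks 0 (of fun j _ => -n j) (of fun _ j => n j) (of fun _ _ => 0)

def boundarySb (A : ℝ) : Matrix (ι ⊕ Unit) (ι ⊕ Unit) ℝ :=
  fromBlocks 0 0 0 (of fun _ _ => A)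

section MulVec

variable (n β : ι → ℝ) (A : ℝ) (v : ι ⊕ Unit → ℝ)

theorem boundaryN_mulVec :
    boundaryN n β *ᵥ v =
      Sum.elim (v (.inr ()) • n) fun _ => n ⬝ᵥ (v ∘ .inl) + β ⬝ᵥ n * v (.inr ()) := by
  ext (j | _) <;> simp [boundaryN, mulVec, dotProduct, mul_comm]

theorem boundaryMD_mulVec :
    boundaryMD n *ᵥ v = Sum.elim (-v (.inr ()) • n) fun _ => n ⬝ᵥ (v ∘ .inl) := by
  ext (j | _) <;> simp [boundaryMD, mulVec, dotProduct, mul_comm]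

theorem boundarySb_mulVec :
    boundarySb A *ᵥ v = Sum.elim (0 : ι → ℝ) fun _ => A * v (.inr ()) := by
  ext (j | _) <;> simp [boundarySb, mulVec, dotProduct]

theorem sumElim_dotProduct (x : ι → ℝ) (y : Unit → ℝ) :
    Sum.elim x y ⬝ᵥ v = x ⬝ᵥ (v ∘ .inl) + y () * v (.inr ()) := by
  rw [← Sum.elim_comp_inl_inr v, sumElim_dotProduct_sumElim]
  simp [dotProduct]

theorem boundaryMD_sub_boundaryN_mulVec_inl (j : ι) :
    ((boundaryMD n - boundaryN n β) *ᵥ v) (.inl j) = -(2 * v (.inr ()) * n j) := by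
  rw [sub_mulVec, boundaryMD_mulVec, boundaryN_mulVec]
  simp only [Pi.sub_apply, Sum.elim_inl, Pi.smul_apply, smul_eq_mul]
  ring

theorem boundaryMD_add_boundarySb_mulVec_dotProduct :
    (boundaryMD n + boundarySb A) *ᵥ v ⬝ᵥ v = A * v (.inr ()) ^ 2 := by
  rw [add_mulVec, boundaryMD_mulVec, boundarySb_mulVec, ← Sum.elim_add_add, sumElim_dotProduct]
  simp only [add_zero, neg_smul, neg_dotProduct, smul_dotProduct, Pi.add_apply, smul_eq_mul]
  ring

theorem boundaryMD_add_boundarySb_add_boundaryN_mulVec_dotProduct (w : ι ⊕ Unit → ℝ) :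
    (boundaryMD n + boundarySb A + boundaryN n β) *ᵥ w ⬝ᵥ v =
      (2 * (n ⬝ᵥ (w ∘ .inl)) + (β ⬝ᵥ n + A) * w (.inr ())) * v (.inr ()) := by
  rw [add_mulVec, add_mulVec, boundaryMD_mulVec, boundarySb_mulVec, boundaryN_mulVec,
    ← Sum.elim_add_add, ← Sum.elim_add_add, sumElim_dotProduct]
  simp only [add_zero, neg_smul, neg_add_cancel, zero_dotProduct, Pi.add_apply]
  ring

end MulVec

theorem ker_boundaryMD_sub_boundaryN_le {n : ι → ℝ} (hn : ∑ i, n i ^ 2 = 1) (β : ι → ℝ)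
    (A : ℝ) :
    LinearMap.ker (boundaryMD n - boundaryN n β).mulVecLin ≤
      LinearMap.ker (boundaryMD n + boundarySb A - boundaryN n β).mulVecLin := by
  intro v hv
  simp only [LinearMap.mem_ker, mulVecLin_apply] at hv ⊢
  obtain ⟨j, -, hj⟩ := Finset.exists_ne_zero_of_sum_ne_zero (hn.trans_ne one_ne_zero)
  have hvp : v (.inr ()) = 0 := by
    have := boundaryMD_sub_boundaryN_mulVec_inl n β v j
    rw [hv] at this
    have hnj : n j ≠ 0 := fun h => hj (by simp [h])
    simpa [hnj] using this
  have hSb : boundarySb A *ᵥ v = 0 := by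
    rw [boundarySb_mulVec, hvp, mul_zero]
    exact Sum.elim_zero_zero
  rw [add_sub_right_comm, add_mulVec, hv, hSb, add_zero]

theorem abs_dotProduct_le (x y : ι → ℝ) :
    |x ⬝ᵥ y| ≤ √(∑ i, x i ^ 2) * √(∑ i, y i ^ 2) := by
  rw [← Real.sqrt_mul (Finset.sum_nonneg fun i _ => sq_nonneg (x i))]
  exact Real.abs_le_sqrt (Finset.sum_mul_sq_le_sq_mul_sq _ _ _)

theorem sum_sq_sumElim (w : ι ⊕ Unit → ℝ) :
    ∑ i, w i ^ 2 = ∑ i, w (.inl i) ^ 2 + w (.inr ()) ^ 2 := by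
  simp [Fintype.sum_sum_type]

theorem abs_mul_le_four_mul_sqrt {A T X c wp vp : ℝ} (hA : 1 ≤ A) (hX : |X| ≤ T) (hwp : |wp| ≤ T)
    (hc : |c| ≤ A) :
    |(2 * X + (c + A) * wp) * vp| ≤ 4 * √A * T * √(A * vp ^ 2) := by
  have hA0 : 0 ≤ A := zero_le_one.trans hA
  have hcA : |c + A| ≤ 2 * A := (abs_add_le c A).trans (by rw [abs_of_nonneg hA0]; linarith)
  have hfirst : |2 * X + (c + A) * wp| ≤ 4 * A * T :=
    calc |2 * X + (c + A) * wp| ≤ 2 * |X| + |c + A| * |wp| := by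
          simpa [abs_mul] using abs_add_le (2 * X) ((c + A) * wp)
      _ ≤ 2 * T + 2 * A * T := by gcongr
      _ ≤ 4 * A * T := by nlinarith [(abs_nonneg X).trans hX]
  calc |(2 * X + (c + A) * wp) * vp| ≤ 4 * A * T * |vp| := by
        rw [abs_mul]; exact mul_le_mul_of_nonneg_right hfirst (abs_nonneg vp)
    _ = 4 * √A * T * √(A * vp ^ 2) := by
        rw [Real.sqrt_mul hA0, Real.sqrt_sq_eq_abs]
        linear_combination (4 * T * |vp|) * (Real.mul_self_sqrt hA0).symm

theorem abs_boundaryMD_add_boundarySb_add_boundaryN_mulVec_dotProduct_le {n : ι → ℝ}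
    (hn : ∑ i, n i ^ 2 = 1) {β : ι → ℝ} {A : ℝ} (hA : 1 ≤ A) (hβn : |β ⬝ᵥ n| ≤ A)
    (w v : ι ⊕ Unit → ℝ) :
    |(boundaryMD n + boundarySb A + boundaryN n β) *ᵥ w ⬝ᵥ v| ≤
      4 * √A * √(∑ i, w i ^ 2) * √((boundaryMD n + boundarySb A) *ᵥ v ⬝ᵥ v) := by
  rw [boundaryMD_add_boundarySb_add_boundaryN_mulVec_dotProduct,
    boundaryMD_add_boundarySb_mulVec_dotProduct]
  refine abs_mul_le_four_mul_sqrt hA ?_ ?_ hβn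
  · calc |n ⬝ᵥ (w ∘ .inl)| ≤ √(∑ i, n i ^ 2) * √(∑ i, w (.inl i) ^ 2) := abs_dotProduct_le _ _
      _ ≤ √(∑ i, w i ^ 2) := by
        rw [hn, Real.sqrt_one, one_mul, sum_sq_sumElim]
        exact Real.sqrt_le_sqrt (le_add_of_nonneg_right (sq_nonneg _))
  · rw [sum_sq_sumElim]
    exact Real.abs_le_sqrt (le_add_of_nonneg_left (Finset.sum_nonneg fun i _ => sq_nonneg _))

end BoundaryPenalty

open BoundaryPenalty in
theorem stmt17_general (d : ℕ) (n β : Fin d → ℝ) (hn : ∑ i, n i ^ 2 = 1) :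
    let A : ℝ := max 1 (Real.sqrt (∑ i, β i ^ 2))
    let N : Matrix (Fin d ⊕ Unit) (Fin d ⊕ Unit) ℝ :=
      Matrix.fromBlocks 0 (Matrix.of fun j _ => n j) (Matrix.of fun _ j => n j)
        (Matrix.of fun _ _ => β ⬝ᵥ n)
    let MD : Matrix (Fin d ⊕ Unit) (Fin d ⊕ Unit) ℝ :=
      Matrix.fromBlocks 0 (Matrix.of fun j _ => -n j) (Matrix.of fun _ j => n j)
        (Matrix.of fun _ _ => 0)
    let Sb : Matrix (Fin d ⊕ Unit) (Fin d ⊕ Unit) ℝ :=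
      Matrix.fromBlocks 0 0 0 (Matrix.of fun _ _ => A)
    LinearMap.ker (MD - N).mulVecLin ≤ LinearMap.ker (MD + Sb - N).mulVecLin ∧
    (∀ v : Fin d ⊕ Unit → ℝ, (MD + Sb).mulVec v ⬝ᵥ v = A * v (Sum.inr ()) ^ 2) ∧
    (∀ w v : Fin d ⊕ Unit → ℝ,
      |(MD + Sb + N).mulVec w ⬝ᵥ v| ≤
        4 * Real.sqrt A * Real.sqrt (∑ i, w i ^ 2) *
          Real.sqrt ((MD + Sb).mulVec v ⬝ᵥ v)) := by
  intro A N MD Sb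
  have hA : 1 ≤ A := le_max_left _ _
  have hβn : |β ⬝ᵥ n| ≤ A :=
    calc |β ⬝ᵥ n| ≤ √(∑ i, β i ^ 2) * √(∑ i, n i ^ 2) := abs_dotProduct_le β n
      _ = √(∑ i, β i ^ 2) := by rw [hn, Real.sqrt_one, mul_one]
      _ ≤ A := le_max_right _ _
  exact ⟨ker_boundaryMD_sub_boundaryN_le hn β A,
    boundaryMD_add_boundarySb_mulVec_dotProduct n A,
    abs_boundaryMD_add_boundarySb_add_boundaryN_mulVec_dotProduct_le hn hA hβn⟩

/-- With `A = max(1, ‖β‖)`, the boundary matrices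
`𝒩 = [[0, n],[nᵀ, β·n]]`, `ℳ_D = [[0, −n],[nᵀ, 0]]` and the boundary penalty
`S^b = A [[0, 0],[0, 1]]` for the scalar diffusion–advection–reaction problem:
(i) `Ker(ℳ_D − 𝒩) ⊆ Ker(ℳ_D + S^b − 𝒩)`;
(ii) `((ℳ_D + S^b) v, v) = A v_p² ≥ 0` for all `v = (v_σ, v_p)`;
(iii) `|((ℳ_D + S^b + 𝒩) w, v)| ≤ 4 A^{1/2} ‖w‖ ((ℳ_D + S^b) v, v)^{1/2}` for all `w, v`. -/
theorem stmt17 (d : ℕ) (hd : 1 ≤ d) (n β : Fin d → ℝ) (hn : ∑ i, n i ^ 2 = 1) :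
    let A : ℝ := max 1 (Real.sqrt (∑ i, β i ^ 2))
    let N : Matrix (Fin d ⊕ Unit) (Fin d ⊕ Unit) ℝ :=
      Matrix.fromBlocks 0 (Matrix.of fun j _ => n j) (Matrix.of fun _ j => n j)
        (Matrix.of fun _ _ => β ⬝ᵥ n)
    let MD : Matrix (Fin d ⊕ Unit) (Fin d ⊕ Unit) ℝ :=
      Matrix.fromBlocks 0 (Matrix.of fun j _ => -n j) (Matrix.of fun _ j => n j)
        (Matrix.of fun _ _ => 0)
    let Sb : Matrix (Fin d ⊕ Unit) (Fin d ⊕ Unit) ℝ :=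
      Matrix.fromBlocks 0 0 0 (Matrix.of fun _ _ => A)
    LinearMap.ker (MD - N).mulVecLin ≤ LinearMap.ker (MD + Sb - N).mulVecLin ∧
    (∀ v : Fin d ⊕ Unit → ℝ, (MD + Sb).mulVec v ⬝ᵥ v = A * v (Sum.inr ()) ^ 2) ∧
    (∀ w v : Fin d ⊕ Unit → ℝ,
      |(MD + Sb + N).mulVec w ⬝ᵥ v| ≤
        4 * Real.sqrt A * Real.sqrt (∑ i, w i ^ 2) *
          Real.sqrt ((MD + Sb).mulVec v ⬝ᵥ v)) :=
  stmt17_general d n β hn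
end
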